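/- The multi-component shape measure ℳ is an affine invariant: let S₁, …, Sₙ be pairwise disjoint bounded measurable subsets of ℝ², each with positive area, let L be an invertible 2×2 real matrix, let b ∈ ℝ², and let T(P) = L·P + b. Then ℳ(T(S₁) ∪ … ∪ T(Sₙ)) = ℳ(S₁ ∪ … ∪ Sₙ), where the components of the transformed multi-component shape are T(S₁), …, T(Sₙ). -/

import Mathlib

/-
An invertible affine map `T P = L P + b` scales every area by `|det L|` and sends centroids to
centroids, so the matrix `M` of second central moments of `T '' S` is `|det L| • L M Lᵀ`. Hence
`det M` picks up the factor `|det L|² (det L)² = |det L|⁴`, which cancels against `m₀₀⁴` in `𝒜`;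
likewise the weights `m₀₀(Sᵢ)⁴ / m₀₀(⋃ Sᵢ)⁴` in `ℳ` are unchanged. Sets of area zero have no
centroid, but there `𝒜 = 0` on both sides since `x / 0 = 0`.
-/

open MeasureTheory Set

/-- Geometric moment `m_{p,q}(S) = ∫∫_S x^p y^q dx dy`. -/
noncomputable def geomMoment (p q : ℕ) (S : Set (ℝ × ℝ)) : ℝ :=
  ∫ P in S, P.1 ^ p * P.2 ^ q

/-- x-coordinate of the centroid of `S`. -/
noncomputable def xc (S : Set (ℝ × ℝ)) : ℝ :=
  geomMoment 1 0 S / geomMoment 0 0 S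

/-- y-coordinate of the centroid of `S`. -/
noncomputable def yc (S : Set (ℝ × ℝ)) : ℝ :=
  geomMoment 0 1 S / geomMoment 0 0 S

/-- Un-normalized central moment `M_{p,q}(S)`. -/
noncomputable def centralMoment (p q : ℕ) (S : Set (ℝ × ℝ)) : ℝ :=
  ∫ P in S, (P.1 - xc S) ^ p * (P.2 - yc S) ^ q

/-- Normalized central moment `μ_{p,q}(S) = m₀₀(S)^{-(p+q+2)/2} · M_{p,q}(S)`. -/
noncomputable def mu (p q : ℕ) (S : Set (ℝ × ℝ)) : ℝ :=
  centralMoment p q S / geomMoment 0 0 S ^ (((p : ℝ) + (q : ℝ) + 2) / 2)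

/-- The affine moment invariant `𝒜(S) = μ₂₀(S)·μ₀₂(S) − μ₁₁(S)²`. -/
noncomputable def affInv (S : Set (ℝ × ℝ)) : ℝ :=
  mu 2 0 S * mu 0 2 S - mu 1 1 S ^ 2

/-- The multi-component shape measure
`ℳ(S₁ ∪ … ∪ Sₙ) = 𝒜(⋃ᵢ Sᵢ) − (1/m₀₀(⋃ᵢ Sᵢ)⁴) · Σᵢ m₀₀(Sᵢ)⁴·𝒜(Sᵢ)`. -/
noncomputable def multiMeasure (n : ℕ) (S : Fin n → Set (ℝ × ℝ)) : ℝ :=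
  affInv (⋃ i, S i) -
    (1 / geomMoment 0 0 (⋃ i, S i) ^ 4) *
      ∑ i, geomMoment 0 0 (S i) ^ 4 * affInv (S i)

section ChangeOfVariables

variable {E F : Type*} [NormedAddCommGroup E] [NormedSpace ℝ E] [FiniteDimensional ℝ E]
  [MeasurableSpace E] [BorelSpace E] [NormedAddCommGroup F] [NormedSpace ℝ F]
  (μ : Measure E) [μ.IsAddHaarMeasure]

theorem measurePreserving_linearMap_add {A : E →ₗ[ℝ] E} (hA : LinearMap.det A ≠ 0) (c : E) :
    MeasurePreserving (fun x => A x + c) (ENNReal.ofReal |LinearMap.det A| • μ) μ := by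
  refine (measurePreserving_add_right μ c).comp ⟨A.continuous_of_finiteDimensional.measurable, ?_⟩
  rw [Measure.map_smul, Measure.map_linearMap_addHaar_eq_smul_addHaar μ hA, smul_smul,
    ← ENNReal.ofReal_mul (abs_nonneg _), ← abs_mul, mul_inv_cancel₀ hA, abs_one,
    ENNReal.ofReal_one, one_smul]

theorem measurableEmbedding_linearMap_add {A : E →ₗ[ℝ] E} (hA : LinearMap.det A ≠ 0) (c : E) :
    MeasurableEmbedding (fun x => A x + c) :=
  (Homeomorph.addRight c).measurableEmbedding.comp
    (A.equivOfDetNeZero hA).toContinuousLinearEquiv.toHomeomorph.measurableEmbedding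

theorem setIntegral_image_linearMap_add {A : E →ₗ[ℝ] E} (hA : LinearMap.det A ≠ 0) (c : E)
    (s : Set E) (g : E → F) :
    ∫ y in (fun x => A x + c) '' s, g y ∂μ = |LinearMap.det A| • ∫ x in s, g (A x + c) ∂μ := by
  rw [(measurePreserving_linearMap_add μ hA c).setIntegral_image_emb
    (measurableEmbedding_linearMap_add hA c), Measure.restrict_smul,
    integral_smul_measure, ENNReal.toReal_ofReal (abs_nonneg _)]

end ChangeOfVariables

theorem Continuous.integrableOn_of_isBounded {X E : Type*} [MetricSpace X] [ProperSpace X]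
    [MeasurableSpace X] [OpensMeasurableSpace X] [NormedAddCommGroup E] {μ : Measure X}
    [IsFiniteMeasureOnCompacts μ] {f : X → E} (hf : Continuous f) {S : Set X}
    (hS : Bornology.IsBounded S) : IntegrableOn f S μ :=
  (hf.continuousOn.integrableOn_compact hS.isCompact_closure).mono_set subset_closure

noncomputable def affineOfMatrix (L : Matrix (Fin 2) (Fin 2) ℝ) (b : ℝ × ℝ) (P : ℝ × ℝ) :
    ℝ × ℝ :=
  Matrix.toLin (Module.Basis.finTwoProd ℝ) (Module.Basis.finTwoProd ℝ) L P + b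

theorem affineOfMatrix_apply (L : Matrix (Fin 2) (Fin 2) ℝ) (b P : ℝ × ℝ) :
    affineOfMatrix L b P =
      (L 0 0 * P.1 + L 0 1 * P.2 + b.1, L 1 0 * P.1 + L 1 1 * P.2 + b.2) := by
  rw [affineOfMatrix, L.eta_fin_two, Matrix.toLin_finTwoProd_apply, Prod.mk_add_mk]
  simp

theorem mu_of_add_eq_two {p q : ℕ} (hpq : p + q = 2) (S : Set (ℝ × ℝ)) :
    mu p q S = centralMoment p q S / geomMoment 0 0 S ^ 2 := by
  have : ((p : ℝ) + q + 2) / 2 = 2 := by rw [← Nat.cast_add, hpq]; norm_num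
  rw [mu, this, Real.rpow_two]

theorem affInv_eq (S : Set (ℝ × ℝ)) :
    affInv S = (centralMoment 2 0 S * centralMoment 0 2 S - centralMoment 1 1 S ^ 2) /
      geomMoment 0 0 S ^ 4 := by
  rw [affInv, mu_of_add_eq_two rfl, mu_of_add_eq_two rfl, mu_of_add_eq_two rfl]
  ring

theorem setIntegral_linear {S : Set (ℝ × ℝ)} (hS : Bornology.IsBounded S) (α β γ : ℝ) :
    ∫ P in S, (α * P.1 + β * P.2 + γ) =
      α * geomMoment 1 0 S + β * geomMoment 0 1 S + γ * geomMoment 0 0 S := by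
  have hint (p q : ℕ) : IntegrableOn (fun P : ℝ × ℝ => P.1 ^ p * P.2 ^ q) S :=
    Continuous.integrableOn_of_isBounded (by fun_prop) hS
  calc _ = ∫ P in S, (α * (P.1 ^ 1 * P.2 ^ 0) + β * (P.1 ^ 0 * P.2 ^ 1)) +
          γ * (P.1 ^ 0 * P.2 ^ 0) := by
        congr 1 with P
        ring
    _ = _ := by
      rw [integral_add ?_ ((hint 0 0).const_mul _),
        integral_add ((hint 1 0).const_mul _) ((hint 0 1).const_mul _), integral_const_mul,
        integral_const_mul, integral_const_mul, geomMoment, geomMoment, geomMoment]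
      exact ((hint 1 0).const_mul _).add ((hint 0 1).const_mul _)

theorem setIntegral_centered_linear_mul_linear {S : Set (ℝ × ℝ)} (hS : Bornology.IsBounded S)
    (α β γ δ : ℝ) :
    ∫ P in S, (α * (P.1 - xc S) + β * (P.2 - yc S)) * (γ * (P.1 - xc S) + δ * (P.2 - yc S)) =
      α * γ * centralMoment 2 0 S + (α * δ + β * γ) * centralMoment 1 1 S +
        β * δ * centralMoment 0 2 S := by
  have hint (p q : ℕ) :
      IntegrableOn (fun P : ℝ × ℝ => (P.1 - xc S) ^ p * (P.2 - yc S) ^ q) S :=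
    Continuous.integrableOn_of_isBounded (by fun_prop) hS
  calc _ = ∫ P in S, (α * γ * ((P.1 - xc S) ^ 2 * (P.2 - yc S) ^ 0) +
          (α * δ + β * γ) * ((P.1 - xc S) ^ 1 * (P.2 - yc S) ^ 1)) +
          β * δ * ((P.1 - xc S) ^ 0 * (P.2 - yc S) ^ 2) := by
        congr 1 with P
        ring
    _ = _ := by
      rw [integral_add ?_ ((hint 0 2).const_mul _),
        integral_add ((hint 2 0).const_mul _) ((hint 1 1).const_mul _), integral_const_mul,
        integral_const_mul, integral_const_mul, centralMoment, centralMoment, centralMoment]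
      exact ((hint 2 0).const_mul _).add ((hint 1 1).const_mul _)

section AffineImage

variable {L : Matrix (Fin 2) (Fin 2) ℝ} (hL : L.det ≠ 0) (b : ℝ × ℝ)
include hL

theorem setIntegral_image_affineOfMatrix (S : Set (ℝ × ℝ)) (g : ℝ × ℝ → ℝ) :
    ∫ P in affineOfMatrix L b '' S, g P = |L.det| * ∫ P in S, g (affineOfMatrix L b P) := by
  rw [← LinearMap.det_toLin (Module.Basis.finTwoProd ℝ) L] at hL ⊢
  exact setIntegral_image_linearMap_add volume hL b S g

theorem geomMoment_zero_zero_image (S : Set (ℝ × ℝ)) :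
    geomMoment 0 0 (affineOfMatrix L b '' S) = |L.det| * geomMoment 0 0 S := by
  simp only [geomMoment, setIntegral_image_affineOfMatrix hL, pow_zero, mul_one]

theorem centroid_image {S : Set (ℝ × ℝ)} (hS : Bornology.IsBounded S)
    (h0 : geomMoment 0 0 S ≠ 0) :
    (xc (affineOfMatrix L b '' S), yc (affineOfMatrix L b '' S)) =
      affineOfMatrix L b (xc S, yc S) := by
  have hL' : |L.det| ≠ 0 := abs_ne_zero.2 hL
  have h10 : geomMoment 1 0 (affineOfMatrix L b '' S) = |L.det| *
      (L 0 0 * geomMoment 1 0 S + L 0 1 * geomMoment 0 1 S + b.1 * geomMoment 0 0 S) := by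
    rw [geomMoment, setIntegral_image_affineOfMatrix hL, ← setIntegral_linear hS]
    simp only [affineOfMatrix_apply, pow_one, pow_zero, mul_one]
  have h01 : geomMoment 0 1 (affineOfMatrix L b '' S) = |L.det| *
      (L 1 0 * geomMoment 1 0 S + L 1 1 * geomMoment 0 1 S + b.2 * geomMoment 0 0 S) := by
    rw [geomMoment, setIntegral_image_affineOfMatrix hL, ← setIntegral_linear hS]
    simp only [affineOfMatrix_apply, pow_one, pow_zero, one_mul]
  rw [affineOfMatrix_apply, xc, yc, xc, yc, h10, h01, geomMoment_zero_zero_image hL]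
  refine Prod.ext ?_ ?_ <;> field_simp

theorem centralMoment_image {S : Set (ℝ × ℝ)} (hS : Bornology.IsBounded S)
    (h0 : geomMoment 0 0 S ≠ 0) (p q : ℕ) :
    centralMoment p q (affineOfMatrix L b '' S) = |L.det| * ∫ P in S,
      (L 0 0 * (P.1 - xc S) + L 0 1 * (P.2 - yc S)) ^ p *
        (L 1 0 * (P.1 - xc S) + L 1 1 * (P.2 - yc S)) ^ q := by
  obtain ⟨hx, hy⟩ := Prod.ext_iff.1 (centroid_image hL b hS h0)
  simp only [affineOfMatrix_apply] at hx hy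
  rw [centralMoment, setIntegral_image_affineOfMatrix hL]
  congr 2 with P
  simp only [affineOfMatrix_apply, hx, hy]
  ring

theorem affInv_image {S : Set (ℝ × ℝ)} (hS : Bornology.IsBounded S) :
    affInv (affineOfMatrix L b '' S) = affInv S := by
  rcases eq_or_ne (geomMoment 0 0 S) 0 with h0 | h0
  · rw [affInv_eq, affInv_eq, geomMoment_zero_zero_image hL, h0]
    simp
  have habs : |L.det| ^ 2 = (L 0 0 * L 1 1 - L 0 1 * L 1 0) ^ 2 := by
    rw [sq_abs, Matrix.det_fin_two]
  simp only [affInv_eq, centralMoment_image hL b hS h0, geomMoment_zero_zero_image hL, pow_zero,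
    mul_one, one_mul, pow_one, sq, setIntegral_centered_linear_mul_linear hS]
  rw [div_eq_div_iff (by positivity) (by positivity)]
  linear_combination (-|L.det| ^ 2 * geomMoment 0 0 S ^ 4 *
    (centralMoment 2 0 S * centralMoment 0 2 S - centralMoment 1 1 S * centralMoment 1 1 S)) * habs

end AffineImage

theorem stmt_8_general (n : ℕ) (S : Fin n → Set (ℝ × ℝ))
    (hbdd : ∀ i, Bornology.IsBounded (S i))
    (L : Matrix (Fin 2) (Fin 2) ℝ) (hL : L.det ≠ 0) (b : ℝ × ℝ)
    (T : ℝ × ℝ → ℝ × ℝ)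
    (hT : ∀ P, T P = (L 0 0 * P.1 + L 0 1 * P.2 + b.1,
                      L 1 0 * P.1 + L 1 1 * P.2 + b.2)) :
    multiMeasure n (fun i => T '' S i) = multiMeasure n S := by
  obtain rfl : T = affineOfMatrix L b :=
    funext fun P => (hT P).trans (affineOfMatrix_apply L b P).symm
  have hL' : |L.det| ≠ 0 := abs_ne_zero.2 hL
  simp only [multiMeasure, ← image_iUnion, affInv_image hL b (Bornology.isBounded_iUnion.2 hbdd),
    affInv_image hL b (hbdd _), geomMoment_zero_zero_image hL, mul_pow, mul_assoc, ← Finset.mul_sum]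
  field_simp

/-- `ℳ` is an affine invariant: for pairwise disjoint bounded
measurable components `S₁, …, Sₙ` of positive area and an invertible affine map
`T(P) = L·P + b`, `ℳ(T(S₁) ∪ … ∪ T(Sₙ)) = ℳ(S₁ ∪ … ∪ Sₙ)`. -/
theorem stmt_8 (n : ℕ) (S : Fin n → Set (ℝ × ℝ))
    (hdisj : Pairwise (Function.onFun Disjoint S))
    (hmeas : ∀ i, MeasurableSet (S i))
    (hbdd : ∀ i, Bornology.IsBounded (S i))
    (hpos : ∀ i, 0 < (volume (S i)).toReal)
    (L : Matrix (Fin 2) (Fin 2) ℝ) (hL : L.det ≠ 0) (b : ℝ × ℝ)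
    (T : ℝ × ℝ → ℝ × ℝ)
    (hT : ∀ P, T P = (L 0 0 * P.1 + L 0 1 * P.2 + b.1,
                      L 1 0 * P.1 + L 1 1 * P.2 + b.2)) :
    multiMeasure n (fun i => T '' S i) = multiMeasure n S :=
  stmt_8_general n S hbdd L hL b T hT
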